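/- arXiv:1010.5115 — 4 statements merged into one kernel-verified Lean document; each statement's English description precedes it below -/
import Mathlib

section
/- Let G be a finite group and p a prime. The map G → G sending g to g_p · g_{p'}^p is a bijection of G onto itself, and g_p · g_{p'}^p has order divisible by p if and only if g has order divisible by p. -/
section Aux

variable {G : Type*} [Group G]

/-- If `x = a * b` with `a, b` commuting of coprime orders, both are powers of `x`. -/
lemma aux_pow_of_decomp (x a b : G) (hc : Commute a b) (hx : x = a * b)
    (cop : Nat.Coprime (orderOf a) (orderOf b)) :
    (∃ n : ℕ, x ^ n = a) ∧ (∃ n : ℕ, x ^ n = b) := by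
  constructor
  · obtain ⟨n, hn1, hn2⟩ := Nat.chineseRemainder cop 1 0
    refine ⟨n, ?_⟩
    rw [hx, hc.mul_pow]
    have ha : a ^ n = a ^ 1 := pow_eq_pow_iff_modEq.mpr hn1
    have hb : b ^ n = b ^ 0 := pow_eq_pow_iff_modEq.mpr hn2
    rw [ha, hb, pow_one, pow_zero, mul_one]
  · obtain ⟨n, hn1, hn2⟩ := Nat.chineseRemainder cop 0 1
    refine ⟨n, ?_⟩
    rw [hx, hc.mul_pow]
    have ha : a ^ n = a ^ 0 := pow_eq_pow_iff_modEq.mpr hn1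
    have hb : b ^ n = b ^ 1 := pow_eq_pow_iff_modEq.mpr hn2
    rw [ha, hb, pow_one, pow_zero, one_mul]

lemma aux_unique (p : ℕ) (hp : p.Prime) (x a b c d : G)
    (hab : Commute a b) (hcd : Commute c d)
    (hx1 : x = a * b) (hx2 : x = c * d)
    (ha : ∃ k, orderOf a = p ^ k) (hcord : ∃ k, orderOf c = p ^ k)
    (hb : ¬ p ∣ orderOf b) (hd : ¬ p ∣ orderOf d) :
    a = c ∧ b = d := by
  obtain ⟨k, hk⟩ := ha
  obtain ⟨k', hk'⟩ := hcord
  have copab : Nat.Coprime (orderOf a) (orderOf b) := by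
    rw [hk]; exact ((hp.coprime_iff_not_dvd).mpr hb).pow_left k
  have copcd : Nat.Coprime (orderOf c) (orderOf d) := by
    rw [hk']; exact ((hp.coprime_iff_not_dvd).mpr hd).pow_left k'
  obtain ⟨⟨na, hna⟩, ⟨nb, hnb⟩⟩ := aux_pow_of_decomp x a b hab hx1 copab
  obtain ⟨⟨nc, hnc⟩, ⟨nd, hnd⟩⟩ := aux_pow_of_decomp x c d hcd hx2 copcd
  have comm : ∀ u v : G, (∃ m, x ^ m = u) → (∃ m, x ^ m = v) → Commute u v := by
    rintro u v ⟨m, rfl⟩ ⟨m', rfl⟩; exact Commute.pow_pow_self x m m'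
  have hac : Commute a c := comm a c ⟨na, hna⟩ ⟨nc, hnc⟩
  have hcb : Commute c b := comm c b ⟨nc, hnc⟩ ⟨nb, hnb⟩
  have hdb : Commute d b := comm d b ⟨nd, hnd⟩ ⟨nb, hnb⟩
  have habcd : a * b = c * d := hx1 ▸ hx2
  have key : a * c⁻¹ = d * b⁻¹ := by
    have h1 : a = c * d * b⁻¹ := eq_mul_inv_of_mul_eq habcd
    have hcw : Commute c (d * b⁻¹) := hcd.mul_right hcb.inv_right
    calc a * c⁻¹ = c * (d * b⁻¹) * c⁻¹ := by rw [h1]; group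
      _ = (d * b⁻¹) * c * c⁻¹ := by rw [hcw.eq]
      _ = d * b⁻¹ := by rw [mul_inv_cancel_right]
  -- order of a * c⁻¹ divides a power of p
  have hdvd1 : orderOf (a * c⁻¹) ∣ p ^ (k + k') := by
    refine (hac.inv_right.orderOf_mul_dvd_lcm).trans ?_
    rw [orderOf_inv, hk, hk', pow_add]
    exact Nat.lcm_dvd (dvd_mul_right _ _) (dvd_mul_left _ _)
  have hdvd2 : orderOf (a * c⁻¹) ∣ orderOf d * orderOf b := by
    rw [key]
    refine (hdb.inv_right.orderOf_mul_dvd_lcm).trans ?_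
    rw [orderOf_inv]
    exact Nat.lcm_dvd (dvd_mul_right _ _) (dvd_mul_left _ _)
  have hnp : ¬ p ∣ orderOf (a * c⁻¹) := fun h => by
    rcases (hp.dvd_mul.mp (h.trans hdvd2)) with h' | h' <;> [exact hd h'; exact hb h']
  have h1 : orderOf (a * c⁻¹) = 1 := by
    have cop : Nat.Coprime (orderOf (a * c⁻¹)) (p ^ (k + k')) :=
      (Nat.Coprime.pow_right _ (((hp.coprime_iff_not_dvd).mpr hnp).symm))
    exact (Nat.gcd_eq_left hdvd1).symm.trans cop
  have hac1 : a = c := by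
    have := orderOf_eq_one_iff.mp h1
    rwa [mul_inv_eq_one] at this
  exact ⟨hac1, by rw [hac1] at habcd; exact mul_left_cancel habcd⟩

end Aux

/-- `PParts p g gp gp'` says that `gp` and `gp'` are the `p`-part and `p'`-part of `g`. -/
def PParts {G : Type*} [Group G] (p : ℕ) (g gp gp' : G) : Prop :=
  (∃ m : ℕ, gp = g ^ m) ∧ (∃ n : ℕ, gp' = g ^ n) ∧ g = gp * gp' ∧
    (∃ a : ℕ, orderOf gp = p ^ a) ∧ ¬ p ∣ orderOf gp'

/-- `f : G → G` is the map `g ↦ g_p * g_{p'}^p`. -/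
def IsPartTwistMap {G : Type*} [Group G] (p : ℕ) (f : G → G) : Prop :=
  ∀ g : G, ∃ gp gp' : G, PParts p g gp gp' ∧ f g = gp * gp' ^ p

/-- The map `g ↦ g_p * g_{p'}^p` is a bijection of the finite group `G`
onto itself, and `g_p * g_{p'}^p` has order divisible by `p` iff `g` does. -/
theorem partTwistMap_bijective_and_preserves_pSingularity
    (p : ℕ) [Fact p.Prime] (G : Type*) [Group G] [Finite G]
    (f : G → G) (hf : IsPartTwistMap p f) :
    Function.Bijective f ∧ ∀ g : G, (p ∣ orderOf (f g) ↔ p ∣ orderOf g) := by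
  have hp : p.Prime := Fact.out
  have hord : ∀ g : G, orderOf (f g) = orderOf g := by
    intro g
    obtain ⟨gp, gp', ⟨⟨m, hm⟩, ⟨n, hn⟩, hg, ⟨a, ha⟩, hb⟩, hfg⟩ := hf g
    have hc : Commute gp gp' := by rw [hm, hn]; exact Commute.pow_pow_self g m n
    have cop : Nat.Coprime (orderOf gp) (orderOf gp') := by
      rw [ha]; exact ((hp.coprime_iff_not_dvd).mpr hb).pow_left a
    have hordp : orderOf (gp' ^ p) = orderOf gp' :=
      Nat.Coprime.orderOf_pow (((hp.coprime_iff_not_dvd).mpr hb).symm)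
    have h1 : orderOf g = orderOf gp * orderOf gp' := by
      rw [hg]; exact hc.orderOf_mul_eq_mul_orderOf_of_coprime cop
    have h2 : orderOf (f g) = orderOf gp * orderOf gp' := by
      rw [hfg, (hc.pow_right p).orderOf_mul_eq_mul_orderOf_of_coprime
        (by rw [hordp]; exact cop), hordp]
    rw [h1, h2]
  have hinj : Function.Injective f := by
    intro g h hgh
    obtain ⟨gp, gp', ⟨⟨m, hm⟩, ⟨n, hn⟩, hg, ⟨a, ha⟩, hb⟩, hfg⟩ := hf g
    obtain ⟨kp, kp', ⟨⟨m', hm'⟩, ⟨n', hn'⟩, hh, ⟨a', ha'⟩, hb'⟩, hfh⟩ := hf h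
    have hcg : Commute gp gp' := by rw [hm, hn]; exact Commute.pow_pow_self g m n
    have hch : Commute kp kp' := by rw [hm', hn']; exact Commute.pow_pow_self h m' n'
    have hordg : orderOf (gp' ^ p) = orderOf gp' :=
      Nat.Coprime.orderOf_pow (((hp.coprime_iff_not_dvd).mpr hb).symm)
    have hordh : orderOf (kp' ^ p) = orderOf kp' :=
      Nat.Coprime.orderOf_pow (((hp.coprime_iff_not_dvd).mpr hb').symm)
    obtain ⟨heq1, heq2⟩ := aux_unique p hp (f g) gp (gp' ^ p) kp (kp' ^ p)
      (hcg.pow_right p) (hch.pow_right p) hfg (by rw [hgh, hfh])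
      ⟨a, ha⟩ ⟨a', ha'⟩ (by rw [hordg]; exact hb) (by rw [hordh]; exact hb')
    have hcomm : Commute gp' kp' := by
      obtain ⟨mm, hmm⟩ := exists_pow_eq_self_of_coprime ((hp.coprime_iff_not_dvd).mpr hb)
      obtain ⟨mm', hmm'⟩ := exists_pow_eq_self_of_coprime ((hp.coprime_iff_not_dvd).mpr hb')
      rw [← hmm, ← hmm', heq2]
      exact Commute.pow_pow_self _ _ _
    have hpow : (gp' * kp'⁻¹) ^ p = 1 := by
      rw [hcomm.inv_right.mul_pow, heq2, inv_pow]
      simp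
    have hdvd : orderOf (gp' * kp'⁻¹) ∣ p := orderOf_dvd_of_pow_eq_one hpow
    have hne : orderOf (gp' * kp'⁻¹) ≠ p := by
      intro hcon
      have hd2 : orderOf (gp' * kp'⁻¹) ∣ orderOf gp' * orderOf kp' := by
        refine (hcomm.inv_right.orderOf_mul_dvd_lcm).trans ?_
        rw [orderOf_inv]
        exact Nat.lcm_dvd (dvd_mul_right _ _) (dvd_mul_left _ _)
      rcases hp.dvd_mul.mp (hcon ▸ hd2) with h' | h' <;> [exact hb h'; exact hb' h']
    have hone : orderOf (gp' * kp'⁻¹) = 1 := ((Nat.dvd_prime hp).mp hdvd).resolve_right hne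
    have hgh' : gp' = kp' := by rwa [orderOf_eq_one_iff, mul_inv_eq_one] at hone
    rw [hg, hh, heq1, hgh']
  exact ⟨Finite.injective_iff_bijective.mp hinj, fun g => by rw [hord g]⟩
end

section
/- Let H be a finite group, K a field of characteristic 0 containing a primitive |H|-th root of unity, and let σ₀ be a field automorphism of the algebraic closure of ℚ in K fixing all p-power roots of unity and raising all p'-order roots of unity to the p-th power. Then for every irreducible K-character χ of H and every h ∈ H, one has χ(h_p h_{p'}^p) = σ₀(χ(h)). In particular the class function h ↦ χ(h_p h_{p'}^p) is again an irreducible character of H. -/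
/-- A matrix representation `τ : H → GL_n(K)` is irreducible. -/
def MatIrreducible {K : Type*} [Field K] {H : Type*} [Group H] {n : ℕ}
    (τ : H →* GL (Fin n) K) : Prop :=
  0 < n ∧ ∀ W : Submodule K (Fin n → K),
    (∀ h : H, ∀ v ∈ W, Matrix.mulVec ((τ h : GL (Fin n) K) : Matrix (Fin n) (Fin n) K) v ∈ W) →
    W = ⊥ ∨ W = ⊤

/-- `χ : H → K` is an irreducible `K`-character of `H`: the trace of some irreducible
matrix representation. -/
def IsIrrChar {K : Type*} [Field K] {H : Type*} [Group H] (χ : H → K) : Prop :=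
  ∃ (n : ℕ) (τ : H →* GL (Fin n) K), MatIrreducible τ ∧
    ∀ h : H, χ h = Matrix.trace ((τ h : GL (Fin n) K) : Matrix (Fin n) (Fin n) K)

open Polynomial Matrix

section TwistExponent

variable {M : Type*} [Monoid M] {p N q : ℕ}

theorem Commute.mul_pow_eq_mul_pow_prime (hq₁ : q ≡ 1 [MOD ordProj[p] N])
    (hqp : q ≡ p [MOD ordCompl[p] N]) {y z : M} (hyz : Commute y z)
    (hy : y ^ ordProj[p] N = 1) (hz : z ^ ordCompl[p] N = 1) :
    (y * z) ^ q = y * z ^ p := by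
  rw [hyz.mul_pow, pow_eq_pow_of_modEq hq₁ hy, pow_one, pow_eq_pow_of_modEq hqp hz]

theorem exists_pow_mul_pow_eq_self (hp : p.Prime) (hN : N ≠ 0) {x : M} (hx : x ^ N = 1) :
    ∃ a b : ℕ, x ^ a * x ^ b = x ∧ (x ^ a) ^ ordProj[p] N = 1 ∧ (x ^ b) ^ ordCompl[p] N = 1 := by
  have hcop : Nat.Coprime (ordProj[p] N) (ordCompl[p] N) :=
    (Nat.coprime_ordCompl hp hN).pow_left _
  have hsplit := Nat.ordProj_mul_ordCompl_eq_self N p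
  obtain ⟨a, ha₁, ha₀⟩ := Nat.chineseRemainder hcop 1 0
  obtain ⟨b, hb₀, hb₁⟩ := Nat.chineseRemainder hcop 0 1
  have hab : a + b ≡ 1 [MOD N] := by
    rw [← hsplit]
    exact (Nat.modEq_and_modEq_iff_modEq_mul hcop).mp
      ⟨by simpa using ha₁.add hb₀, by simpa using ha₀.add hb₁⟩
  have pow_pow_eq_one {c m m' : ℕ} (hc : c ≡ 0 [MOD m']) (hmN : m * m' = N) :
      (x ^ c) ^ m = 1 := by
    obtain ⟨t, rfl⟩ := Nat.modEq_zero_iff_dvd.mp hc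
    rw [← pow_mul, show m' * t * m = N * t by rw [← hmN]; ring, pow_mul, hx, one_pow]
  exact ⟨a, b, by rw [← pow_add, pow_eq_pow_of_modEq hab hx, pow_one],
    pow_pow_eq_one ha₀ hsplit, pow_pow_eq_one hb₀ (by rw [mul_comm, hsplit])⟩

theorem map_eq_pow_of_pow_eq_one {F : Type*} [FunLike F M M] [MonoidHomClass F M M] (σ : F)
    (hp : p.Prime) (hN : N ≠ 0)
    (hfix : ∀ y : M, (∃ a : ℕ, y ^ (p ^ a) = 1) → σ y = y)
    (hpow : ∀ z : M, ∀ n : ℕ, n ≠ 0 → ¬ p ∣ n → z ^ n = 1 → σ z = z ^ p)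
    (hq₁ : q ≡ 1 [MOD ordProj[p] N]) (hqp : q ≡ p [MOD ordCompl[p] N])
    {x : M} (hx : x ^ N = 1) : σ x = x ^ q := by
  obtain ⟨a, b, hab, ha, hb⟩ := exists_pow_mul_pow_eq_self hp hN hx
  rw [← hab, map_mul, hfix _ ⟨_, ha⟩,
    hpow _ _ (Nat.ordCompl_pos p hN).ne' (Nat.not_dvd_ordCompl hp hN) hb,
    (Commute.pow_pow_self x a b).mul_pow_eq_mul_pow_prime hq₁ hqp ha hb]

theorem Nat.Coprime.of_modEq_ordProj_ordCompl (hp : p.Prime) (hN : N ≠ 0)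
    (hq₁ : q ≡ 1 [MOD ordProj[p] N]) (hqp : q ≡ p [MOD ordCompl[p] N]) : q.Coprime N := by
  rw [← Nat.ordProj_mul_ordCompl_eq_self N p]
  refine Nat.Coprime.mul_right ?_ ?_
  · rw [Nat.Coprime, hq₁.gcd_eq, Nat.gcd_one_left]
  · rw [Nat.Coprime, hqp.gcd_eq]
    exact Nat.coprime_ordCompl hp hN

theorem PParts.mul_pow_eq_pow {G : Type*} [Group G] (hp : p.Prime) (hN : N ≠ 0)
    (hq₁ : q ≡ 1 [MOD ordProj[p] N]) (hqp : q ≡ p [MOD ordCompl[p] N])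
    {g gp gp' : G} (hg : PParts p g gp gp') (hgN : g ^ N = 1) : gp * gp' ^ p = g ^ q := by
  obtain ⟨⟨m, rfl⟩, ⟨n, rfl⟩, hprod, ⟨a, hordp⟩, hordp'⟩ := hg
  have hpow_eq_one (k : ℕ) : (g ^ k) ^ N = 1 := by rw [← pow_mul, mul_comm, pow_mul, hgN, one_pow]
  have hp_part : (g ^ m) ^ ordProj[p] N = 1 := by
    rw [← orderOf_dvd_iff_pow_eq_one, hordp, ← hp.pow_dvd_iff_dvd_ordProj hN, ← hordp]
    exact orderOf_dvd_of_pow_eq_one (hpow_eq_one m)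
  have hp'_part : (g ^ n) ^ ordCompl[p] N = 1 :=
    orderOf_dvd_iff_pow_eq_one.mp <|
      Nat.dvd_ordCompl_of_dvd_not_dvd (orderOf_dvd_of_pow_eq_one (hpow_eq_one n)) hordp'
  rw [← (Commute.pow_pow_self g m n).mul_pow_eq_mul_pow_prime hq₁ hqp hp_part hp'_part, ← hprod]

theorem IsPartTwistMap.eq_pow {G : Type*} [Group G] [Fintype G] {f : G → G} (hp : p.Prime)
    (hq₁ : q ≡ 1 [MOD ordProj[p] (Fintype.card G)])
    (hqp : q ≡ p [MOD ordCompl[p] (Fintype.card G)]) (hf : IsPartTwistMap p f) (g : G) :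
    f g = g ^ q := by
  obtain ⟨gp, gp', hg, hfg⟩ := hf g
  rw [hfg, hg.mul_pow_eq_pow hp Fintype.card_ne_zero hq₁ hqp pow_card_eq_one]

end TwistExponent

theorem Matrix.exists_trace_eq_natCast_of_isIdempotentElem {K n : Type*} [Field K] [Fintype n]
    [DecidableEq n] {E : Matrix n n K} (hE : IsIdempotentElem E) : ∃ r : ℕ, E.trace = r := by
  have hE' : IsIdempotentElem (Matrix.toLin' E) := hE.map Matrix.toLinAlgEquiv'
  exact ⟨_, by
    rw [← Matrix.trace_toLin'_eq, (LinearMap.IsIdempotentElem.isProj_range _ hE').trace]⟩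

namespace Lagrange

variable {K : Type*} [Field K] {ι : Type*} {s : Finset ι} {v : ι → K}

theorem nodal_dvd_of_eval_eq_zero (hvs : Set.InjOn v s) {f : K[X]}
    (hf : ∀ i ∈ s, f.eval (v i) = 0) : nodal s v ∣ f := by
  rw [← modByMonic_eq_zero_iff_dvd nodal_monic]
  refine eq_zero_of_degree_lt_of_eval_index_eq_zero _ hvs ?_ fun i hi => ?_
  · rw [← degree_nodal (v := v)]
    exact degree_modByMonic_lt f nodal_monic
  · rw [modByMonic_eq_sub_mul_div f (nodal s v), eval_sub, eval_mul, hf i hi,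
      eval_nodal_at_node hi, zero_mul, sub_zero]

variable [DecidableEq ι] {A : Type*} [Ring A] [Algebra K A] {a : A}

theorem aeval_eq_sum_smul_aeval_basis (hvs : Set.InjOn v s) (ha : aeval a (nodal s v) = 0)
    (f : K[X]) : aeval a f = ∑ i ∈ s, f.eval (v i) • aeval a (Lagrange.basis s v i) := by
  obtain ⟨g, hg⟩ := nodal_dvd_of_eval_eq_zero hvs
    (f := f - interpolate s v (fun i => f.eval (v i))) fun i hi => by
      rw [eval_sub, eval_interpolate_at_node _ hvs hi, sub_self]
  rw [← sub_eq_zero, ← sub_eq_zero.mpr (congrArg (aeval a) hg)]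
  simp [interpolate_apply, ha, Algebra.smul_def]

theorem isIdempotentElem_aeval_basis (hvs : Set.InjOn v s) (ha : aeval a (nodal s v) = 0)
    {i : ι} (hi : i ∈ s) : IsIdempotentElem (aeval a (Lagrange.basis s v i)) := by
  rw [IsIdempotentElem, ← map_mul, aeval_eq_sum_smul_aeval_basis hvs ha,
    Finset.sum_eq_single_of_mem i hi fun j hj hji => by
      rw [eval_mul, eval_basis_of_ne hji.symm hj, zero_mul, zero_smul]]
  rw [eval_mul, eval_basis_self hvs hi, one_mul, one_smul]

theorem map_trace_eq_trace_pow {n : Type*} [Fintype n] [DecidableEq n] (hvs : Set.InjOn v s)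
    {M : Matrix n n K} (hM : aeval M (nodal s v) = 0) (σ : K →+* K) {q : ℕ}
    (hσ : ∀ i ∈ s, σ (v i) = v i ^ q) : σ M.trace = (M ^ q).trace := by
  have trace_pow (k : ℕ) : (M ^ k).trace =
      ∑ i ∈ s, v i ^ k * (aeval M (Lagrange.basis s v i)).trace := by
    rw [← aeval_X_pow (R := K), aeval_eq_sum_smul_aeval_basis hvs hM, trace_sum]
    simp_rw [trace_smul, eval_X_pow, smul_eq_mul]
  conv_lhs => rw [← pow_one M, trace_pow]
  rw [trace_pow, map_sum]
  refine Finset.sum_congr rfl fun i hi => ?_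
  obtain ⟨r, hr⟩ := exists_trace_eq_natCast_of_isIdempotentElem
    (isIdempotentElem_aeval_basis hvs hM hi)
  rw [map_mul, hr, map_natCast, pow_one, hσ i hi]

end Lagrange

theorem Matrix.map_trace_eq_trace_pow_of_pow_eq_one {K n : Type*} [Field K] [Fintype n]
    [DecidableEq n] {N : ℕ} (hN : 0 < N) {ζ : K} (hζ : IsPrimitiveRoot ζ N) {M : Matrix n n K}
    (hM : M ^ N = 1) (σ : K →+* K) {q : ℕ} (hσ : ∀ x : K, x ^ N = 1 → σ x = x ^ q) :
    σ M.trace = (M ^ q).trace := by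
  classical
  refine Lagrange.map_trace_eq_trace_pow (s := nthRootsFinset N (1 : K)) (v := id)
    (Set.injOn_id _) ?_ σ fun x hx => hσ x ((mem_nthRootsFinset hN 1).mp hx)
  rw [Lagrange.nodal_eq, Function.id_def, ← X_pow_sub_one_eq_prod hN hζ]
  simp [hM]

theorem Matrix.trace_mulRight_comp_mulLeft {K m : Type*} [Field K] [Fintype m] [DecidableEq m]
    (A B : Matrix m m K) :
    LinearMap.trace K _ (LinearMap.mulRight K B ∘ₗ LinearMap.mulLeft K A) = A.trace * B.trace := by
  rw [LinearMap.trace_eq_matrix_trace K (stdBasis K m m), trace, trace, trace, Finset.sum_mul_sum,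
    ← Finset.sum_product']
  refine Finset.sum_congr rfl fun ⟨i, j⟩ _ => ?_
  have hrepr (M : Matrix m m K) : (stdBasis K m m).repr M (i, j) = M i j := by simp [stdBasis]
  rw [diag_apply, LinearMap.toMatrix_apply, hrepr, stdBasis_eq_single, LinearMap.comp_apply,
    LinearMap.mulLeft_apply, LinearMap.mulRight_apply, mul_assoc, mul_apply,
    Finset.sum_eq_single i (fun k _ hk => by simp [hk]) (by simp), single_mul_apply_same, one_mul,
    diag_apply, diag_apply]

section Irreducibility

variable {K H : Type*} [Field K] [Group H] {n : ℕ}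

theorem matIrreducible_iff_isIdempotentElem {ρ : H →* GL (Fin n) K} :
    MatIrreducible ρ ↔ 0 < n ∧ ∀ E : Matrix (Fin n) (Fin n) K, IsIdempotentElem E →
      (∀ h, (ρ h : Matrix (Fin n) (Fin n) K) * E = E * ρ h * E) → E = 0 ∨ E = 1 := by
  refine and_congr_right fun _ => ⟨fun hirr E hE hρE => ?_, fun hidem W hW => ?_⟩
  · have hE' : IsIdempotentElem (toLin' E) := hE.map toLinAlgEquiv'
    refine (hirr (LinearMap.range (toLin' E)) ?_).imp (fun hbot => ?_) fun htop => ?_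
    · rintro h _ ⟨w, rfl⟩
      exact ⟨ρ h *ᵥ E *ᵥ w, by simp [mulVec_mulVec, hρE h, ← mul_assoc, hE.eq]⟩
    · rwa [LinearMap.range_eq_bot, map_eq_zero_iff _ toLin'.injective] at hbot
    · refine toLin'.injective (LinearMap.ext fun v => ?_)
      rw [toLin'_one, LinearMap.id_apply]
      exact (LinearMap.IsIdempotentElem.isProj_range _ hE').map_id v (htop ▸ Submodule.mem_top)
  · obtain ⟨W', hc⟩ := W.exists_isCompl
    set P := W.projection W' hc
    have hρP (h : H) : (ρ h : Matrix (Fin n) (Fin n) K) * P.toMatrix' =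
        P.toMatrix' * ρ h * P.toMatrix' := by
      refine toLin'.injective (LinearMap.ext fun v => ?_)
      simp only [toLin'_mul, toLin'_toMatrix']
      exact (W.projection_apply_of_mem_left hc (hW h _ (W.projection_apply_mem hc v))).symm
    have hrange : LinearMap.range (toLin' P.toMatrix') = W := by
      rw [toLin'_toMatrix']
      exact W.range_projection hc
    refine (hidem P.toMatrix' ((W.isIdempotentElem_projection hc).map
      LinearMap.toMatrixAlgEquiv') hρP).imp (fun h0 => ?_) fun h1 => ?_
    · rw [← hrange, h0, map_zero, LinearMap.range_zero]
    · rw [← hrange, h1, toLin'_one, LinearMap.range_id]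

theorem MatIrreducible.of_map {L : Type*} [Field L] (σ : K →+* L) {ρ : H →* GL (Fin n) K}
    (hρ : MatIrreducible ((GeneralLinearGroup.map σ).comp ρ)) : MatIrreducible ρ := by
  rw [matIrreducible_iff_isIdempotentElem] at hρ ⊢
  refine ⟨hρ.1, fun E hE hρE => ?_⟩
  have hinj : Function.Injective (σ.mapMatrix : Matrix (Fin n) (Fin n) K →+* _) :=
    Matrix.map_injective σ.injective
  refine (hρ.2 (σ.mapMatrix E) (hE.map _) fun h => ?_).imp
    (fun h0 => hinj (by rw [h0, map_zero])) fun h1 => hinj (by rw [h1, map_one])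
  simpa using congrArg σ.mapMatrix (hρE h)

theorem MatIrreducible.of_mul_eq_mul {ρ ρ' : H →* GL (Fin n) K} (hρ : MatIrreducible ρ)
    (Y : GL (Fin n) K) (hY : ∀ h, ρ h * Y = Y * ρ' h) : MatIrreducible ρ' := by
  rw [matIrreducible_iff_isIdempotentElem] at hρ ⊢
  refine ⟨hρ.1, fun E hE hρE => ?_⟩
  have hρY (h : H) : (ρ h : Matrix (Fin n) (Fin n) K) = Y * ρ' h * (Y⁻¹ : GL (Fin n) K) := by
    rw [← Units.val_mul, ← Units.val_mul, ← hY, mul_inv_cancel_right]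
  have hE' : IsIdempotentElem ((Y : Matrix (Fin n) (Fin n) K) * E * (Y⁻¹ : GL (Fin n) K)) := by
    simp only [IsIdempotentElem, mul_assoc, Units.inv_mul_cancel_left, ← mul_assoc E E, hE.eq]
  refine (hρ.2 _ hE' fun h => ?_).imp (fun h0 => ?_) fun h1 => ?_
  · simp only [hρY, mul_assoc, Units.inv_mul_cancel_left]
    simp only [← mul_assoc, hρE, hE.eq]
  · exact (Y.mul_right_eq_zero).mp ((Y⁻¹).mul_left_eq_zero.mp h0)
  · rw [← Units.inv_mul_cancel_left Y E, Units.mul_inv_eq_one.mp h1, Units.inv_mul]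

theorem MatIrreducible.isUnit_of_mul_eq_mul {ρ : H →* GL (Fin n) K} (hρ : MatIrreducible ρ)
    {ρ' : H → Matrix (Fin n) (Fin n) K} {Y : Matrix (Fin n) (Fin n) K} (hY0 : Y ≠ 0)
    (hY : ∀ h, (ρ h : Matrix (Fin n) (Fin n) K) * Y = Y * ρ' h) : IsUnit Y := by
  rw [← isUnit_toLin'_iff, LinearMap.isUnit_iff_range_eq_top]
  refine (hρ.2 _ ?_).resolve_left ?_
  · rintro h _ ⟨w, rfl⟩
    exact ⟨ρ' h *ᵥ w, by simp [mulVec_mulVec, hY h]⟩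
  · rwa [LinearMap.range_eq_bot, map_eq_zero_iff _ toLin'.injective]

section Average

variable [Fintype H] {m : Type*} [Fintype m] [DecidableEq m]

noncomputable def averageIntertwiner (ρ ρ' : H →* GL m K) :
    Matrix m m K →ₗ[K] Matrix m m K :=
  ∑ h, LinearMap.mulRight K (ρ' h⁻¹ : Matrix m m K) ∘ₗ LinearMap.mulLeft K (ρ h : Matrix m m K)

variable (ρ ρ' : H →* GL m K)

theorem averageIntertwiner_apply (X : Matrix m m K) :
    averageIntertwiner ρ ρ' X = ∑ h, (ρ h : Matrix m m K) * X * (ρ' h⁻¹ : Matrix m m K) := by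
  simp [averageIntertwiner]

theorem mul_averageIntertwiner (g : H) (X : Matrix m m K) :
    (ρ g : Matrix m m K) * averageIntertwiner ρ ρ' X = averageIntertwiner ρ ρ' X * ρ' g := by
  simp only [averageIntertwiner_apply, Finset.mul_sum, Finset.sum_mul]
  refine Fintype.sum_equiv (Equiv.mulLeft g) _ _ fun h => ?_
  simp only [Equiv.coe_mulLeft, _root_.mul_inv_rev, map_mul, Units.val_mul, mul_assoc]
  simp

theorem trace_averageIntertwiner :
    LinearMap.trace K _ (averageIntertwiner ρ ρ') =
      ∑ h, (ρ h : Matrix m m K).trace * (ρ' h⁻¹ : Matrix m m K).trace := by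
  simp only [averageIntertwiner, map_sum, trace_mulRight_comp_mulLeft]

theorem averageIntertwiner_apply_of_mul_eq_mul {X : Matrix m m K}
    (hX : ∀ h, (ρ h : Matrix m m K) * X = X * ρ' h) :
    averageIntertwiner ρ ρ' X = (Fintype.card H : K) • X := by
  rw [averageIntertwiner_apply, Finset.sum_congr rfl fun h _ => ?_, Finset.sum_const,
    Finset.card_univ, Nat.cast_smul_eq_nsmul]
  rw [hX, mul_assoc, ← Units.val_mul, ← map_mul, mul_inv_cancel, map_one, Units.val_one, mul_one]

theorem trace_averageIntertwiner_self_ne_zero [CharZero K] [Nonempty m] :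
    LinearMap.trace K _ (averageIntertwiner ρ ρ) ≠ 0 := by
  have hN : (Fintype.card H : K) ≠ 0 := Nat.cast_ne_zero.mpr Fintype.card_ne_zero
  have hidem : IsIdempotentElem ((Fintype.card H : K)⁻¹ • averageIntertwiner ρ ρ) := by
    refine LinearMap.ext fun X => ?_
    rw [Module.End.mul_apply, LinearMap.smul_apply, LinearMap.smul_apply, map_smul,
      averageIntertwiner_apply_of_mul_eq_mul ρ ρ (mul_averageIntertwiner ρ ρ · X), smul_smul,
      smul_smul, mul_assoc, inv_mul_cancel₀ hN, mul_one]
  have hone : ((Fintype.card H : K)⁻¹ • averageIntertwiner ρ ρ) 1 = 1 := by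
    rw [LinearMap.smul_apply, averageIntertwiner_apply_of_mul_eq_mul ρ ρ (by simp), smul_smul,
      inv_mul_cancel₀ hN, one_smul]
  have hne : (Fintype.card H : K)⁻¹ • averageIntertwiner ρ ρ ≠ 0 := fun h0 => by
    simp [h0] at hone
  rw [Ne, ← LinearMap.IsIdempotentElem.trace_eq_zero_iff hidem, map_smul, smul_eq_mul] at hne
  exact right_ne_zero_of_mul hne

theorem exists_ne_zero_mul_eq_mul_of_trace_eq [CharZero K] [Nonempty m]
    (htr : ∀ h, (ρ' h : Matrix m m K).trace = (ρ h : Matrix m m K).trace) :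
    ∃ Y : Matrix m m K, Y ≠ 0 ∧ ∀ h, (ρ h : Matrix m m K) * Y = Y * ρ' h := by
  have hT : averageIntertwiner ρ ρ' ≠ 0 := by
    intro h0
    have h := trace_averageIntertwiner ρ ρ'
    rw [h0, map_zero] at h
    apply trace_averageIntertwiner_self_ne_zero ρ
    rw [trace_averageIntertwiner]
    simpa only [htr] using h.symm
  obtain ⟨X, hX⟩ := DFunLike.ne_iff.mp hT
  exact ⟨_, hX, fun h => mul_averageIntertwiner ρ ρ' h X⟩

end Average

theorem MatIrreducible.of_trace_eq [Fintype H] [CharZero K] {ρ ρ' : H →* GL (Fin n) K}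
    (hρ : MatIrreducible ρ)
    (htr : ∀ h, (ρ' h : Matrix (Fin n) (Fin n) K).trace = (ρ h : Matrix (Fin n) (Fin n) K).trace) :
    MatIrreducible ρ' := by
  have : Nonempty (Fin n) := ⟨⟨0, hρ.1⟩⟩
  obtain ⟨Y, hY0, hY⟩ := exists_ne_zero_mul_eq_mul_of_trace_eq ρ ρ' htr
  exact hρ.of_mul_eq_mul (hρ.isUnit_of_mul_eq_mul hY0 hY).unit fun h => Units.ext (hY h)

theorem MatIrreducible.map_of_pow_apply_trace_eq [Fintype H] [CharZero K] {ρ : H →* GL (Fin n) K}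
    (hρ : MatIrreducible ρ) (σ : K →+* K) {k : ℕ} (hk : k ≠ 0)
    (hσk : ∀ h, (σ ^ k) (ρ h : Matrix (Fin n) (Fin n) K).trace =
      (ρ h : Matrix (Fin n) (Fin n) K).trace) :
    MatIrreducible ((GeneralLinearGroup.map σ).comp ρ) := by
  have hcomp : (GeneralLinearGroup.map (σ ^ k)).comp ρ =
      (GeneralLinearGroup.map (σ ^ (k - 1))).comp ((GeneralLinearGroup.map σ).comp ρ) := by
    rw [← MonoidHom.comp_assoc, ← GeneralLinearGroup.map_comp, ← RingHom.mul_def,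
      ← pow_succ, Nat.sub_add_cancel (Nat.one_le_iff_ne_zero.mpr hk)]
  refine MatIrreducible.of_map (σ ^ (k - 1)) (hcomp ▸ hρ.of_trace_eq fun h => ?_)
  rw [← hσk h, AddMonoidHom.map_trace]
  rfl

end Irreducibility

/-- Let `H` be a finite group, `K` a field of characteristic `0` containing
a primitive `|H|`-th root of unity, and `σ₀` a (ring) automorphism-type map of the
algebraic numbers in `K` (here: a ring homomorphism `K → K`) fixing all `p`-power roots
of unity and raising all `p'`-order roots of unity to the `p`-th power. Then for every
irreducible `K`-character `χ` of `H` and every `h ∈ H`,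
`χ(h_p h_{p'}^p) = σ₀(χ(h))`; in particular the class function `h ↦ χ(h_p h_{p'}^p)`
is again an irreducible character of `H`. -/
theorem galois_twist_of_irreducible_character
    (p : ℕ) [Fact p.Prime] (H : Type*) [Group H] [Fintype H]
    (K : Type*) [Field K] [CharZero K]
    (hroot : ∃ ζ : K, IsPrimitiveRoot ζ (Fintype.card H))
    (σ₀ : K →+* K)
    (hfix : ∀ ζ : K, (∃ a : ℕ, ζ ^ (p ^ a) = 1) → σ₀ ζ = ζ)
    (hpow : ∀ ζ : K, ∀ n : ℕ, n ≠ 0 → ¬ p ∣ n → ζ ^ n = 1 → σ₀ ζ = ζ ^ p)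
    (f : H → H) (hf : IsPartTwistMap p f)
    (χ : H → K) (hχ : IsIrrChar χ) :
    (∀ h : H, χ (f h) = σ₀ (χ h)) ∧ IsIrrChar (fun h => χ (f h)) := by
  obtain ⟨n, ρ, hρ, hχρ⟩ := hχ
  obtain ⟨ζ, hζ⟩ := hroot
  have hp : p.Prime := Fact.out
  have hN : Fintype.card H ≠ 0 := Fintype.card_ne_zero
  obtain ⟨q, hq₁, hqp⟩ := Nat.chineseRemainder
    ((Nat.coprime_ordCompl hp hN).pow_left ((Fintype.card H).factorization p)) 1 p
  have hσ₀ (x : K) (hx : x ^ Fintype.card H = 1) : σ₀ x = x ^ q :=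
    map_eq_pow_of_pow_eq_one σ₀ hp hN hfix hpow hq₁ hqp hx
  have hσ₀χ (h : H) : σ₀ (χ h) = χ (h ^ q) := by
    rw [hχρ, hχρ, map_pow, Units.val_pow_eq_pow_val]
    refine map_trace_eq_trace_pow_of_pow_eq_one (Nat.pos_of_ne_zero hN) hζ ?_ σ₀ hσ₀
    rw [← Units.val_pow_eq_pow_val, ← map_pow, pow_card_eq_one, map_one, Units.val_one]
  have hfχ (h : H) : χ (f h) = σ₀ (χ h) := by rw [hf.eq_pow hp hq₁ hqp, hσ₀χ]
  refine ⟨hfχ, n, (GeneralLinearGroup.map σ₀).comp ρ, ?_, fun h => ?_⟩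
  · have hσ₀_pow_χ (k : ℕ) (h : H) : (σ₀ ^ k) (χ h) = χ (h ^ q ^ k) := by
      induction k generalizing h with
      | zero => simp
      | succ k ih =>
        rw [pow_succ, RingHom.mul_def, RingHom.comp_apply, hσ₀χ, ih, ← pow_mul, ← pow_succ']
    refine hρ.map_of_pow_apply_trace_eq σ₀ (Nat.totient_pos.mpr (Nat.pos_of_ne_zero hN)).ne'
      fun h => ?_
    rw [← hχρ, hσ₀_pow_χ, pow_eq_pow_of_modEq
      (Nat.ModEq.pow_totient (Nat.Coprime.of_modEq_ordProj_ordCompl hp hN hq₁ hqp))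
      pow_card_eq_one, pow_one]
  · dsimp only
    rw [hfχ, hχρ, AddMonoidHom.map_trace]
    rfl
end

section
/- Consequently, the map (Q, f) ↦ (Q, σ(f)) is an isomorphism from the G-poset of b̄-Brauer pairs to the G-poset of σ(b̄)-Brauer pairs, for any block b̄ of kG. -/
/-- Coefficientwise Frobenius `σ` on a group algebra. -/
noncomputable def frobMA (p : ℕ) [hp : Fact p.Prime] {k : Type*} [Field k] {L : Type*}
    [Group L] (x : MonoidAlgebra k L) : MonoidAlgebra k L :=
  MonoidAlgebra.ofCoeff (Finsupp.mapRange (· ^ p) (zero_pow hp.out.ne_zero) x.coeff)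

/-- A block of a ring: a primitive idempotent of the center. -/
def IsPrimCentralIdem {R : Type*} [Ring R] (e : R) : Prop :=
  (∀ y : R, y * e = e * y) ∧ IsIdempotentElem e ∧ e ≠ 0 ∧
    ∀ f g : R, (∀ y : R, y * f = f * y) → (∀ y : R, y * g = g * y) →
      IsIdempotentElem f → IsIdempotentElem g → f * g = 0 → e = f + g → f = 0 ∨ g = 0

/-- `a ∈ (kG)^R`: `a` is fixed under conjugation by every element of `R`. -/
def RFixed {k : Type*} [Field k] {G : Type*} [Group G] (R : Subgroup G)
    (a : MonoidAlgebra k G) : Prop :=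
  ∀ r ∈ R, ∀ g : G, a.coeff (r⁻¹ * g * r) = a.coeff g

/-- `i` is a primitive idempotent of the fixed-point algebra `(kG)^R`. -/
def PrimFixedIdem {k : Type*} [Field k] {G : Type*} [Group G] (R : Subgroup G)
    (i : MonoidAlgebra k G) : Prop :=
  RFixed R i ∧ IsIdempotentElem i ∧ i ≠ 0 ∧
    ∀ j₁ j₂ : MonoidAlgebra k G, RFixed R j₁ → RFixed R j₂ →
      IsIdempotentElem j₁ → IsIdempotentElem j₂ →
      j₁ * j₂ = 0 → j₂ * j₁ = 0 → i = j₁ + j₂ → j₁ = 0 ∨ j₂ = 0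

/-- The Brauer homomorphism as truncation `kG → kC_G(Q)`. -/
noncomputable def brauerMap {k : Type*} [Field k] {G : Type*} [Group G] (Q : Subgroup G)
    (a : MonoidAlgebra k G) : MonoidAlgebra k ↥(Subgroup.centralizer (Q : Set G)) :=
  MonoidAlgebra.ofCoeff (Finsupp.comapDomain Subtype.val a.coeff (Subtype.val_injective.injOn))

/-- `(Q, e)` is a `b`-Brauer pair: `Q` is a `p`-subgroup of `G` and `e` is a block of
`kC_G(Q)` with `Br_Q(b) e = e`. -/
def IsBrauerPair (p : ℕ) {k : Type*} [Field k] {G : Type*} [Group G]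
    (b : MonoidAlgebra k G) (Q : Subgroup G)
    (e : MonoidAlgebra k ↥(Subgroup.centralizer (Q : Set G))) : Prop :=
  IsPGroup p Q ∧ IsPrimCentralIdem e ∧ brauerMap Q b * e = e

/-- The Alperin–Broué inclusion of Brauer pairs, via its standard characterization:
`(Q, e) ≤ (R, f)` iff `Q ≤ R` and every primitive idempotent `i` of `(kG)^R` with
`Br_R(i) f ≠ 0` satisfies `Br_Q(i) e ≠ 0`. -/
def BrauerPairLE {k : Type*} [Field k] {G : Type*} [Group G]
    (Q : Subgroup G) (e : MonoidAlgebra k ↥(Subgroup.centralizer (Q : Set G)))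
    (R : Subgroup G) (f : MonoidAlgebra k ↥(Subgroup.centralizer (R : Set G))) : Prop :=
  Q ≤ R ∧ ∀ i : MonoidAlgebra k G, PrimFixedIdem R i →
    brauerMap R i * f ≠ 0 → brauerMap Q i * e ≠ 0

/-- Conjugate of a subgroup. -/
def conjSub {G : Type*} [Group G] (g : G) (Q : Subgroup G) : Subgroup G :=
  Subgroup.map (MulAut.conj g).toMonoidHom Q

/-- Conjugation `x ↦ g x g⁻¹` maps `C_G(Q)` to `C_G(gQg⁻¹)`. -/
def conjElem {G : Type*} [Group G] (g : G) (Q : Subgroup G)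
    (x : ↥(Subgroup.centralizer (Q : Set G))) :
    ↥(Subgroup.centralizer ((conjSub g Q : Subgroup G) : Set G)) :=
  ⟨g * (x : G) * g⁻¹, by
    rw [Subgroup.mem_centralizer_iff]
    intro y hy
    rcases Subgroup.mem_map.mp hy with ⟨z, hz, rfl⟩
    have hx : z * (x : G) = (x : G) * z :=
      Subgroup.mem_centralizer_iff.mp x.2 z hz
    simp only [MulEquiv.coe_toMonoidHom, MulAut.conj_apply]
    have h1 : g * z * g⁻¹ * (g * (x : G) * g⁻¹) = g * (z * (x : G)) * g⁻¹ := by group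
    have h2 : g * (x : G) * g⁻¹ * (g * z * g⁻¹) = g * ((x : G) * z) * g⁻¹ := by group
    rw [h1, h2, hx]⟩

/-- The induced conjugation map `kC_G(Q) → kC_G(gQg⁻¹)` on group algebras. -/
noncomputable def conjMA {k : Type*} [Field k] {G : Type*} [Group G] (g : G)
    (Q : Subgroup G) (e : MonoidAlgebra k ↥(Subgroup.centralizer (Q : Set G))) :
    MonoidAlgebra k ↥(Subgroup.centralizer ((conjSub g Q : Subgroup G) : Set G)) :=
  MonoidAlgebra.ofCoeff (Finsupp.mapDomain (conjElem g Q) e.coeff)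

/-!
For a perfect field `k` of characteristic `p`, the coefficientwise Frobenius `σ` on `kL` is the
ring automorphism induced by the field automorphism `x ↦ x ^ p`. Blocks, fixed points under
conjugation, primitive idempotents of `(kG)^R`, the Brauer homomorphism and conjugation are all
compatible with the ring automorphism of `kL` induced by any isomorphism of coefficient fields,
so such an automorphism carries Brauer pairs, and their inclusion, onto each other.
-/

open MonoidAlgebra

lemma isPrimCentralIdem_map_iff {R S : Type*} [Ring R] [Ring S] (φ : R ≃+* S) (e : R) :
    IsPrimCentralIdem (φ e) ↔ IsPrimCentralIdem e := by
  simp only [IsPrimCentralIdem, IsIdempotentElem, φ.surjective.forall, ← map_mul, ← map_add,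
    EquivLike.apply_eq_iff_eq, RingEquiv.map_eq_zero_iff, ne_eq]

section CoefficientEquiv

variable {k k' : Type*} [Field k] [Field k'] (σ : k ≃+* k') {G : Type*} [Group G]

lemma coeff_mapRingEquiv_eq_mapRange {M : Type*} [Monoid M] (x : MonoidAlgebra k M) :
    (mapRingEquiv M σ x).coeff = x.coeff.mapRange σ (map_zero σ) := by
  ext; simp

lemma rFixed_mapRingEquiv_iff (R : Subgroup G) (a : MonoidAlgebra k G) :
    RFixed R (mapRingEquiv G σ a) ↔ RFixed R a := by
  simp only [RFixed, coeff_mapRingEquiv, EquivLike.apply_eq_iff_eq]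

lemma primFixedIdem_mapRingEquiv_iff (R : Subgroup G) (i : MonoidAlgebra k G) :
    PrimFixedIdem R (mapRingEquiv G σ i) ↔ PrimFixedIdem R i := by
  simp only [PrimFixedIdem, IsIdempotentElem, (mapRingEquiv G σ).surjective.forall,
    rFixed_mapRingEquiv_iff, ← map_mul, ← map_add, EquivLike.apply_eq_iff_eq,
    RingEquiv.map_eq_zero_iff, ne_eq]

lemma brauerMap_mapRingEquiv (Q : Subgroup G) (a : MonoidAlgebra k G) :
    brauerMap Q (mapRingEquiv G σ a) = mapRingEquiv _ σ (brauerMap Q a) := by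
  ext x
  simp [brauerMap]

lemma conjMA_mapRingEquiv (g : G) (Q : Subgroup G)
    (e : MonoidAlgebra k ↥(Subgroup.centralizer (Q : Set G))) :
    conjMA g Q (mapRingEquiv _ σ e) = mapRingEquiv _ σ (conjMA g Q e) := by
  ext1
  simp only [conjMA, coeff_ofCoeff, coeff_mapRingEquiv_eq_mapRange]
  exact Finsupp.mapDomain_mapRange _ _ _ _ (map_add σ)

lemma isBrauerPair_mapRingEquiv_iff (p : ℕ) (b : MonoidAlgebra k G) (Q : Subgroup G)
    (e : MonoidAlgebra k ↥(Subgroup.centralizer (Q : Set G))) :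
    IsBrauerPair p (mapRingEquiv G σ b) Q (mapRingEquiv _ σ e) ↔ IsBrauerPair p b Q e := by
  simp only [IsBrauerPair, isPrimCentralIdem_map_iff, brauerMap_mapRingEquiv, ← map_mul,
    EquivLike.apply_eq_iff_eq]

lemma brauerPairLE_mapRingEquiv_iff (Q R : Subgroup G)
    (e : MonoidAlgebra k ↥(Subgroup.centralizer (Q : Set G)))
    (f : MonoidAlgebra k ↥(Subgroup.centralizer (R : Set G))) :
    BrauerPairLE Q (mapRingEquiv _ σ e) R (mapRingEquiv _ σ f) ↔ BrauerPairLE Q e R f := by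
  simp only [BrauerPairLE, (mapRingEquiv G σ).surjective.forall, primFixedIdem_mapRingEquiv_iff,
    brauerMap_mapRingEquiv, ← map_mul, ne_eq, RingEquiv.map_eq_zero_iff]

end CoefficientEquiv

lemma frobMA_eq_mapRingEquiv (p : ℕ) [Fact p.Prime] {k : Type*} [Field k] [CharP k p]
    [PerfectRing k p] {L : Type*} [Group L] :
    frobMA p = ⇑(mapRingEquiv L (frobeniusEquiv k p)) := by
  funext x
  ext g
  rw [frobMA, coeff_ofCoeff, Finsupp.mapRange_apply, coeff_mapRingEquiv, coe_frobeniusEquiv,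
    frobenius_def]

theorem frobenius_isomorphism_of_brauer_pair_posets_general
    (p : ℕ) [Fact p.Prime] (k : Type*) [Field k] [IsAlgClosed k] [CharP k p]
    (G : Type*) [Group G]
    (b : MonoidAlgebra k G) :
    (∀ (Q : Subgroup G) (e : MonoidAlgebra k ↥(Subgroup.centralizer (Q : Set G))),
      IsBrauerPair p b Q e ↔ IsBrauerPair p (frobMA p b) Q (frobMA p e)) ∧
    (∀ Q : Subgroup G,
      Set.BijOn (frobMA p)
        {e : MonoidAlgebra k ↥(Subgroup.centralizer (Q : Set G)) | IsBrauerPair p b Q e}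
        {e : MonoidAlgebra k ↥(Subgroup.centralizer (Q : Set G)) |
          IsBrauerPair p (frobMA p b) Q e}) ∧
    (∀ (Q R : Subgroup G) (e : MonoidAlgebra k ↥(Subgroup.centralizer (Q : Set G)))
        (f : MonoidAlgebra k ↥(Subgroup.centralizer (R : Set G))),
      IsBrauerPair p b Q e → IsBrauerPair p b R f →
      (BrauerPairLE Q e R f ↔ BrauerPairLE Q (frobMA p e) R (frobMA p f))) ∧
    (∀ (g : G) (Q : Subgroup G) (e : MonoidAlgebra k ↥(Subgroup.centralizer (Q : Set G))),
      frobMA p (conjMA g Q e) = conjMA g Q (frobMA p e)) := by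
  simp only [frobMA_eq_mapRingEquiv]
  refine ⟨fun Q e => (isBrauerPair_mapRingEquiv_iff _ p b Q e).symm,
    fun Q => (mapRingEquiv _ (frobeniusEquiv k p)).toEquiv.bijOn fun e =>
      isBrauerPair_mapRingEquiv_iff _ p b Q e,
    fun Q R e f _ _ => (brauerPairLE_mapRingEquiv_iff _ Q R e f).symm,
    fun g Q e => (conjMA_mapRingEquiv _ g Q e).symm⟩

/-- For a block `b̄` of `kG`, the map `(Q, e) ↦ (Q, σ(e))` is an
isomorphism of `G`-posets from the poset of `b̄`-Brauer pairs to the poset of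
`σ(b̄)`-Brauer pairs: it is a bijection on Brauer pairs, it preserves and reflects the
Alperin–Broué inclusion, and it commutes with the conjugation action of `G`. -/
theorem frobenius_isomorphism_of_brauer_pair_posets
    (p : ℕ) [Fact p.Prime] (k : Type*) [Field k] [IsAlgClosed k] [CharP k p]
    (G : Type*) [Group G] [Finite G]
    (b : MonoidAlgebra k G) (hb : IsPrimCentralIdem b) :
    (∀ (Q : Subgroup G) (e : MonoidAlgebra k ↥(Subgroup.centralizer (Q : Set G))),
      IsBrauerPair p b Q e ↔ IsBrauerPair p (frobMA p b) Q (frobMA p e)) ∧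
    (∀ Q : Subgroup G,
      Set.BijOn (frobMA p)
        {e : MonoidAlgebra k ↥(Subgroup.centralizer (Q : Set G)) | IsBrauerPair p b Q e}
        {e : MonoidAlgebra k ↥(Subgroup.centralizer (Q : Set G)) |
          IsBrauerPair p (frobMA p b) Q e}) ∧
    (∀ (Q R : Subgroup G) (e : MonoidAlgebra k ↥(Subgroup.centralizer (Q : Set G)))
        (f : MonoidAlgebra k ↥(Subgroup.centralizer (R : Set G))),
      IsBrauerPair p b Q e → IsBrauerPair p b R f →
      (BrauerPairLE Q e R f ↔ BrauerPairLE Q (frobMA p e) R (frobMA p f))) ∧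
    (∀ (g : G) (Q : Subgroup G) (e : MonoidAlgebra k ↥(Subgroup.centralizer (Q : Set G))),
      frobMA p (conjMA g Q e) = conjMA g Q (frobMA p e)) :=
  frobenius_isomorphism_of_brauer_pair_posets_general p k G b
end

section
/- Let G be a finite group and (K,𝒪,k) a p-modular system with k of characteristic p. Then the set of central idempotents of 𝒪G coincides with the set of central idempotents of W(k)G, where W(k) ⊆ 𝒪 is the ring of Witt vectors of k; in particular every block of 𝒪G has coefficients in W(k). -/
/-!
Both `W(k)` and `𝒪` are complete with residue field `k`. A central idempotent `e` of `𝒪G`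
reduces to an idempotent of `kG`, which lifts to an idempotent `f` of `W(k)G` by Newton's
iteration. The image of `f` in `𝒪G` is an idempotent commuting with `e` and congruent to it
modulo the maximal ideal; since commuting idempotents satisfy `(e - f)³ = e - f`, the difference
lies in every power of the maximal ideal, hence vanishes. Centrality of `f` follows because
`ι` is injective: `𝒪` has characteristic zero and every nonzero Witt vector is `p ^ m` times a
unit.
-/

namespace MonoidAlgebra

variable {R : Type*} [CommRing R] {M : Type*}

def coeffsIn (I : Ideal R) : Submodule R R[M] where
  carrier := {x | ∀ m, x.coeff m ∈ I}
  add_mem' hx hy m := I.add_mem (hx m) (hy m)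
  zero_mem' _ := I.zero_mem
  smul_mem' r _ hx m := I.mul_mem_left r (hx m)

variable {I J : Ideal R} {x y : R[M]}

lemma mem_coeffsIn : x ∈ coeffsIn I ↔ ∀ m, x.coeff m ∈ I := Iff.rfl

lemma coeffsIn_mono (h : I ≤ J) : coeffsIn (M := M) I ≤ coeffsIn J :=
  fun _ hx m => h (hx m)

lemma eq_zero_of_forall_mem_coeffsIn_pow [IsHausdorff I R] (h : ∀ n, x ∈ coeffsIn (I ^ n)) :
    x = 0 := by
  ext m
  refine IsHausdorff.haus ‹_› _ fun n => ?_
  simpa [SModEq.sub_mem] using h n m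

lemma exists_forall_sub_mem_coeffsIn_pow [IsPrecomplete I R] [Finite M] (a : ℕ → R[M])
    (ha : ∀ {m n}, m ≤ n → a n - a m ∈ coeffsIn (I ^ m)) :
    ∃ L : R[M], ∀ n, L - a n ∈ coeffsIn (I ^ n) := by
  have : Fintype M := .ofFinite M
  choose L hL using fun m : M => IsPrecomplete.prec ‹_› (f := fun n => (a n).coeff m)
    fun hkn => SModEq.symm <| SModEq.sub_mem.2 <| by simpa using ha hkn m
  refine ⟨ofCoeff (Finsupp.equivFunOnFinite.symm L), fun n m => ?_⟩
  simpa using SModEq.sub_mem.1 (hL m n).symm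

variable [Monoid M]

lemma mem_coeffsIn_ker {S : Type*} [CommRing S] (f : R →+* S) :
    x ∈ coeffsIn (RingHom.ker f) ↔ mapRingHom M f x = 0 := by
  simp [mem_coeffsIn, RingHom.mem_ker, ← coeff_inj, Finsupp.ext_iff, coeff_mapRingHom]

lemma mul_mem_coeffsIn_mul (hx : x ∈ coeffsIn I) (hy : y ∈ coeffsIn J) :
    x * y ∈ coeffsIn (I * J) := fun m => by
  classical
  rw [coeff_mul]
  refine Submodule.finsuppSum_mem _ _ _ _ fun a _ => Submodule.finsuppSum_mem _ _ _ _ fun b _ => ?_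
  split_ifs
  exacts [Ideal.mul_mem_mul (hx a) (hy b), zero_mem _]

lemma mul_mem_coeffsIn_left (hx : x ∈ coeffsIn I) (y : R[M]) : x * y ∈ coeffsIn I := by
  simpa using mul_mem_coeffsIn_mul (J := ⊤) hx fun _ => Submodule.mem_top

lemma mul_mem_coeffsIn_right (x : R[M]) (hy : y ∈ coeffsIn I) : x * y ∈ coeffsIn I := by
  simpa using mul_mem_coeffsIn_mul (I := ⊤) (fun _ => Submodule.mem_top) hy

lemma eq_of_sub_mem_coeffsIn_of_isIdempotentElem_of_commute [IsHausdorff I R] {e f : R[M]}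
    (he : IsIdempotentElem e) (hf : IsIdempotentElem f) (hef : Commute e f)
    (h : e - f ∈ coeffsIn I) : e = f := by
  have cube : (e - f) * ((e - f) * (e - f)) = e - f := by
    simp only [mul_sub, sub_mul, he.eq, hf.eq, hef.eq, ← mul_assoc]
    simp only [mul_assoc, he.eq]
    abel
  refine sub_eq_zero.1 (eq_zero_of_forall_mem_coeffsIn_pow (I := I) fun n => ?_)
  induction n with
  | zero => exact fun m => by simp
  | succ n ih =>
    simpa [cube, pow_succ'] using mul_mem_coeffsIn_mul h (mul_mem_coeffsIn_left ih (e - f))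

theorem exists_isIdempotentElem_sub_mem_coeffsIn [IsAdicComplete I R] [Finite M]
    (hx : x * x - x ∈ coeffsIn I) :
    ∃ e : R[M], IsIdempotentElem e ∧ e - x ∈ coeffsIn I := by
  -- The Newton step `y ↦ 3 y² - 2 y³` for `y * y = y` squares the defect `y * y - y`.
  set a : ℕ → R[M] := fun n => (fun y => 3 * y ^ 2 - 2 * y ^ 3)^[n] x
  have a_succ (n : ℕ) : a (n + 1) = 3 * a n ^ 2 - 2 * a n ^ 3 :=
    Function.iterate_succ_apply' _ _ _
  have defect (n : ℕ) : a n * a n - a n ∈ coeffsIn (I ^ 2 ^ n) := by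
    induction n with
    | zero => simpa [a] using hx
    | succ n ih =>
      have : a (n + 1) * a (n + 1) - a (n + 1) =
          (a n * a n - a n) * ((a n * a n - a n) * (4 * (a n * a n - a n) - 3)) := by
        rw [a_succ]; noncomm_ring
      rw [this, pow_succ, pow_mul, sq]
      exact mul_mem_coeffsIn_mul ih (mul_mem_coeffsIn_left ih _)
  have step (n : ℕ) : a (n + 1) - a n ∈ coeffsIn (I ^ (n + 1)) := by
    have : a (n + 1) - a n = (a n * a n - a n) * (1 - 2 * a n) := by rw [a_succ]; noncomm_ring
    rw [this]
    exact mul_mem_coeffsIn_left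
      (coeffsIn_mono (Ideal.pow_le_pow_right Nat.lt_two_pow_self) (defect n)) _
  have cauchy {m n : ℕ} (hmn : m ≤ n) : a n - a m ∈ coeffsIn (I ^ m) := by
    induction n, hmn using Nat.le_induction with
    | base => simp
    | succ n hmn ih =>
      rw [← sub_add_sub_cancel]
      exact add_mem (coeffsIn_mono (Ideal.pow_le_pow_right (by omega)) (step n)) ih
  obtain ⟨L, hL⟩ := exists_forall_sub_mem_coeffsIn_pow a cauchy
  refine ⟨L, sub_eq_zero.1 (eq_zero_of_forall_mem_coeffsIn_pow (I := I) fun n => ?_), ?_⟩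
  · have : L * L - L = (L - a n) * L + a n * (L - a n) + (a n * a n - a n) - (L - a n) := by
      noncomm_ring
    rw [this]
    refine sub_mem (add_mem (add_mem (mul_mem_coeffsIn_left (hL n) L)
      (mul_mem_coeffsIn_right _ (hL n))) ?_) (hL n)
    exact coeffsIn_mono (Ideal.pow_le_pow_right Nat.lt_two_pow_self.le) (defect n)
  · have := add_mem (hL 1) (step 0)
    rwa [sub_add_sub_cancel, pow_one] at this

lemma mapRingHom_mem_center {S : Type*} [CommRing S] (f : R →+* S) {z : R[M]}
    (hz : z ∈ Subring.center R[M]) : mapRingHom M f z ∈ Subring.center S[M] := by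
  rw [Subring.mem_center_iff] at hz ⊢
  intro y
  induction y using induction_on with
  | of m =>
    have : of S M m = mapRingHom M f (of R M m) := by simp
    rw [this, ← map_mul, ← map_mul, hz]
  | add y y' hy hy' => rw [add_mul, mul_add, hy, hy']
  | smul r y hy => rw [smul_mul_assoc, hy, mul_smul_comm]

end MonoidAlgebra

lemma WittVector.ringHom_injective {p : ℕ} [Fact p.Prime] {k : Type*} [Field k] [CharP k p]
    [PerfectRing k p] {S : Type*} [CommRing S] [IsDomain S] (ι : WittVector p k →+* S)
    (hp : (p : S) ≠ 0) : Function.Injective ι := by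
  refine (injective_iff_map_eq_zero ι).2 fun a ha => by_contra fun ha0 => ?_
  obtain ⟨m, b, rfl⟩ := exists_eq_pow_p_mul' a ha0
  rw [map_mul, map_pow, map_natCast] at ha
  exact mul_ne_zero (pow_ne_zero m hp) (b.isUnit.map ι).ne_zero ha

open MonoidAlgebra IsLocalRing

/-- Let `G` be a finite group and `(K, 𝒪, k)` a `p`-modular system: `𝒪` a
complete discrete valuation ring of characteristic `0` with algebraically closed residue
field `k` of characteristic `p`, and let `ι : W(k) → 𝒪` be the canonical embedding of the
Witt vectors (a ring homomorphism compatible with the residue maps).  Then the set of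
central idempotents of `𝒪G` coincides with the (image of the) set of central idempotents
of `W(k)G`; in particular every block of `𝒪G` has coefficients in `W(k)`. -/
theorem central_idempotents_of_OG_eq_wittVector_ones
    (p : ℕ) [Fact p.Prime] (G : Type*) [Group G] [Finite G]
    (𝒪 : Type*) [CommRing 𝒪] [IsDomain 𝒪] [IsDiscreteValuationRing 𝒪] [CharZero 𝒪]
    [IsAdicComplete (IsLocalRing.maximalIdeal 𝒪) 𝒪]
    [CharP (IsLocalRing.ResidueField 𝒪) p] [IsAlgClosed (IsLocalRing.ResidueField 𝒪)]
    (ι : WittVector p (IsLocalRing.ResidueField 𝒪) →+* 𝒪)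
    (hι : ∀ x : WittVector p (IsLocalRing.ResidueField 𝒪),
      IsLocalRing.residue 𝒪 (ι x) = x.coeff 0) :
    (fun e₀ : MonoidAlgebra (WittVector p (IsLocalRing.ResidueField 𝒪)) G =>
        (MonoidAlgebra.ofCoeff (Finsupp.mapRange ι ι.map_zero e₀.coeff) : MonoidAlgebra 𝒪 G)) ''
      {e₀ : MonoidAlgebra (WittVector p (IsLocalRing.ResidueField 𝒪)) G |
        IsIdempotentElem e₀ ∧ ∀ y, y * e₀ = e₀ * y} =
    {e : MonoidAlgebra 𝒪 G | IsIdempotentElem e ∧ ∀ y, y * e = e * y} := by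
  set F := mapRingHom G ι
  have hF : Function.Injective F := map_injective _ <|
    WittVector.ringHom_injective ι (Nat.cast_ne_zero.2 (Fact.out : p.Prime).ne_zero)
  have hred : (mapRingHom G (residue 𝒪)).comp F = mapRingHom G WittVector.constantCoeff := by
    rw [← mapRingHom_comp]
    congr 1
    ext x
    exact hι x
  simp_rw [← Subring.mem_center_iff]
  ext e
  constructor
  · rintro ⟨e₀, ⟨he₀, hc₀⟩, rfl⟩
    exact ⟨he₀.map F, mapRingHom_mem_center ι hc₀⟩
  rintro ⟨he, hce⟩
  obtain ⟨x, hx⟩ := map_surjective (M := G) WittVector.constantCoeff.toAddMonoidHom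
    (WittVector.constantCoeff_surjective p) (mapRingHom G (residue 𝒪) e)
  change mapRingHom G WittVector.constantCoeff x = _ at hx
  have defect : x * x - x ∈ coeffsIn (Ideal.span {(p : WittVector p (ResidueField 𝒪))}) := by
    rw [← WittVector.ker_constantCoeff, mem_coeffsIn_ker, map_sub, map_mul, hx, (he.map _).eq,
      sub_self]
  obtain ⟨f, hf, hfx⟩ := exists_isIdempotentElem_sub_mem_coeffsIn defect
  rw [← WittVector.ker_constantCoeff, mem_coeffsIn_ker, map_sub, sub_eq_zero, hx] at hfx
  have hFf : F f = e := by
    refine eq_of_sub_mem_coeffsIn_of_isIdempotentElem_of_commute (I := maximalIdeal 𝒪)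
      (hf.map F) he (Subring.mem_center_iff.1 hce (F f)) ?_
    rw [← ker_residue, mem_coeffsIn_ker, map_sub, sub_eq_zero, ← RingHom.comp_apply, hred, hfx]
  refine ⟨f, ⟨hf, Subring.mem_center_iff.2 fun y => hF ?_⟩, hFf⟩
  rw [map_mul, map_mul, hFf, Subring.mem_center_iff.1 hce]
end
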